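/- arXiv:1605.05480 — 2 statements merged into one kernel-verified Lean document; each statement's English description precedes it below -/
import Mathlib

section
/- For every real β ≥ 1 there exists a constant C > 0 such that for all integers j, l ≥ 1, Σ_{k=1}^∞ 1 / ((1+log k)^{2β} (1+|j-k|) (1+|k-l|)) ≤ C / (1+|j-l|). -/
open Real

noncomputable section ConvLogAux

/-- Bertrand-type weight `1 / ((1 + log(1+n))^2 (1+n))`. -/
def convBW (n : ℕ) : ℝ := 1 / ((1 + Real.log (1 + (n : ℝ))) ^ 2 * (1 + (n : ℝ)))

lemma convBW_log_nonneg (n : ℕ) : 0 ≤ Real.log (1 + (n : ℝ)) :=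
  Real.log_nonneg (le_add_of_nonneg_right (Nat.cast_nonneg n))

lemma convBW_nonneg (n : ℕ) : 0 ≤ convBW n := by
  have h := convBW_log_nonneg n
  unfold convBW
  positivity

lemma convBW_summable : Summable convBW := by
  set u : ℕ → ℝ := fun n => 1 / (1 + Real.log (1 + (n : ℝ))) with hu
  have hApos : ∀ n : ℕ, 0 < 1 + Real.log (1 + (n : ℝ)) := fun n => by
    have := convBW_log_nonneg n; linarith
  have key : ∀ n : ℕ, convBW n ≤ 4 * (u n - u (n + 1)) := by
    intro n
    have h0 := hApos n
    have h1 := hApos (n + 1)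
    have hL0 := convBW_log_nonneg n
    have hL1 := convBW_log_nonneg (n + 1)
    have hcast : (1 : ℝ) + ((n : ℕ) + 1 : ℕ) = (1 + (n : ℝ)) + 1 := by push_cast; ring
    -- gap lower bound : log(n+2) - log(n+1) ≥ 1/(n+2)
    have hgap : Real.log (1 + ((n + 1 : ℕ) : ℝ)) - Real.log (1 + (n : ℝ)) ≥
        1 / ((n : ℝ) + 2) := by
      have hx : (0 : ℝ) < ((n : ℝ) + 2) / ((n : ℝ) + 1) := by positivity
      have := Real.one_sub_inv_le_log_of_pos hx
      have hlog : Real.log (((n : ℝ) + 2) / ((n : ℝ) + 1)) =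
          Real.log ((n : ℝ) + 2) - Real.log ((n : ℝ) + 1) :=
        Real.log_div (by positivity) (by positivity)
      have hinv : (((n : ℝ) + 2) / ((n : ℝ) + 1))⁻¹ = ((n : ℝ) + 1) / ((n : ℝ) + 2) := by
        rw [inv_div]
      rw [hlog, hinv] at this
      have heq1 : Real.log (1 + ((n + 1 : ℕ) : ℝ)) = Real.log ((n : ℝ) + 2) := by
        push_cast; ring_nf
      have heq2 : Real.log (1 + (n : ℝ)) = Real.log ((n : ℝ) + 1) := by ring_nf
      rw [heq1, heq2]
      have h2 : (1 : ℝ) - ((n : ℝ) + 1) / ((n : ℝ) + 2) = 1 / ((n : ℝ) + 2) := by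
        field_simp
        norm_num
      linarith [this, h2.ge, h2.le]
    -- doubling : 1 + log(n+2) ≤ 2 (1 + log(n+1))
    have hdbl : 1 + Real.log (1 + ((n + 1 : ℕ) : ℝ)) ≤ 2 * (1 + Real.log (1 + (n : ℝ))) := by
      have hle : (1 : ℝ) + ((n + 1 : ℕ) : ℝ) ≤ 2 * (1 + (n : ℝ)) := by push_cast; linarith
      have hmono : Real.log (1 + ((n + 1 : ℕ) : ℝ)) ≤ Real.log (2 * (1 + (n : ℝ))) :=
        Real.log_le_log (by positivity) hle
      have hlog2 : Real.log (2 * (1 + (n : ℝ))) = Real.log 2 + Real.log (1 + (n : ℝ)) :=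
        Real.log_mul (by norm_num) (by positivity)
      have h2 : Real.log 2 ≤ 1 := by
        have := Real.log_le_sub_one_of_pos (show (0:ℝ) < 2 by norm_num)
        linarith
      linarith
    have hudiff : u n - u (n + 1) =
        (Real.log (1 + ((n + 1 : ℕ) : ℝ)) - Real.log (1 + (n : ℝ))) /
          ((1 + Real.log (1 + (n : ℝ))) * (1 + Real.log (1 + ((n + 1 : ℕ) : ℝ)))) := by
      simp only [hu]
      rw [div_sub_div _ _ (ne_of_gt h0) (ne_of_gt h1)]
      congr 1
      ring
    rw [hudiff]
    unfold convBW
    set A : ℝ := 1 + Real.log (1 + (n : ℝ)) with hAdef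
    set B : ℝ := 1 + Real.log (1 + ((n + 1 : ℕ) : ℝ)) with hBdef
    set D : ℝ := Real.log (1 + ((n + 1 : ℕ) : ℝ)) - Real.log (1 + (n : ℝ)) with hDdef
    have hA1 : 1 ≤ A := by rw [hAdef]; linarith
    have hn0 : (0 : ℝ) ≤ (n : ℝ) := Nat.cast_nonneg n
    have hDpos : 0 ≤ D := le_trans (by positivity) hgap
    have hD1 : 1 ≤ D * ((n : ℝ) + 2) := by
      have hpos : (0 : ℝ) < (n : ℝ) + 2 := by positivity
      calc (1 : ℝ) = (1 / ((n : ℝ) + 2)) * ((n : ℝ) + 2) := by field_simp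
        _ ≤ D * ((n : ℝ) + 2) := mul_le_mul_of_nonneg_right hgap hpos.le
    have key2 : 1 ≤ 2 * D * (1 + (n : ℝ)) := by nlinarith [hD1, mul_nonneg hDpos hn0]
    have hBA : B ≤ 2 * A := by rw [hAdef, hBdef]; linarith [hdbl]
    rw [← mul_div_assoc]
    rw [div_le_div_iff₀ (by positivity) (by positivity)]
    have c1 : A * B ≤ 2 * A ^ 2 := by nlinarith [h0, hBA]
    have c2 : 2 * A ^ 2 ≤ 4 * D * (A ^ 2 * (1 + (n : ℝ))) := by
      nlinarith [mul_le_mul_of_nonneg_left key2 (show (0 : ℝ) ≤ 2 * A ^ 2 by positivity)]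
    nlinarith [c1, c2]
  have hnn : ∀ n : ℕ, 0 ≤ u n - u (n + 1) := by
    intro n
    have h0 := hApos n
    have h1 := hApos (n + 1)
    have : u (n + 1) ≤ u n := by
      apply one_div_le_one_div_of_le h0
      have : Real.log (1 + (n : ℝ)) ≤ Real.log (1 + ((n + 1 : ℕ) : ℝ)) :=
        Real.log_le_log (by positivity) (by push_cast; linarith)
      linarith
    linarith
  have husum : Summable (fun n => u n - u (n + 1)) := by
    apply summable_of_sum_range_le hnn (c := u 0)
    intro n
    rw [Finset.sum_range_sub' u n]
    have h0 := hApos n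
    have : 0 ≤ u n := le_of_lt (by positivity)
    linarith
  exact Summable.of_nonneg_of_le convBW_nonneg key (husum.mul_left 4)

/-- The `ℤ`-indexed majorant. -/
def convG (m : ℤ) : ℝ := 4 * convBW m.natAbs

lemma convG_nonneg (m : ℤ) : 0 ≤ convG m := by
  have := convBW_nonneg m.natAbs
  unfold convG; linarith

lemma convG_summable : Summable convG := by
  apply Summable.of_nat_of_neg
  · exact (convBW_summable.mul_left 4).congr fun n => by simp [convG]
  · exact (convBW_summable.mul_left 4).congr fun n => by simp [convG]

/-- Pointwise key estimate for the single-convolution sum. -/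
lemma convKeyA (x d : ℝ) (hx : 1 ≤ x) (hd : 0 ≤ d) :
    1 / ((1 + Real.log x) ^ 2 * (1 + d)) ≤
      4 / ((1 + Real.log (1 + d)) ^ 2 * (1 + d)) + 1 / x ^ 2 := by
  have hlx : 0 ≤ Real.log x := Real.log_nonneg hx
  have hld : 0 ≤ Real.log (1 + d) := Real.log_nonneg (by linarith)
  have hxpos : (0 : ℝ) < x := by linarith
  rcases le_or_gt (1 + d) (x ^ 2) with h | h
  · have hlog : Real.log (1 + d) ≤ 2 * Real.log x := by
      have := Real.log_le_log (by linarith) h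
      rwa [Real.log_pow, Nat.cast_ofNat] at this
    have h1 : 1 / ((1 + Real.log x) ^ 2 * (1 + d)) ≤
        4 / ((1 + Real.log (1 + d)) ^ 2 * (1 + d)) := by
      rw [div_le_div_iff₀ (by positivity) (by positivity)]
      have hsq : (1 + Real.log (1 + d)) ^ 2 ≤ 4 * (1 + Real.log x) ^ 2 := by
        nlinarith [hlog, hlx, hld, sq_nonneg (Real.log x)]
      nlinarith [mul_le_mul_of_nonneg_right hsq (show (0 : ℝ) ≤ 1 + d by linarith)]
    have h2 : (0 : ℝ) ≤ 1 / x ^ 2 := by positivity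
    linarith
  · have h1 : 1 / ((1 + Real.log x) ^ 2 * (1 + d)) ≤ 1 / x ^ 2 := by
      rw [div_le_div_iff₀ (by positivity) (by positivity)]
      have hge : (1 : ℝ) ≤ (1 + Real.log x) ^ 2 := by nlinarith [hlx]
      nlinarith [mul_le_mul_of_nonneg_right hge (show (0 : ℝ) ≤ 1 + d by linarith), h]
    have h2 : (0 : ℝ) ≤ 4 / ((1 + Real.log (1 + d)) ^ 2 * (1 + d)) := by positivity
    linarith

lemma pnat_one_le_real (k : ℕ+) : (1 : ℝ) ≤ (k : ℝ) := by
  exact_mod_cast k.one_le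

/-- Uniform bound for the single convolution sum. -/
lemma convLemA : ∃ M : ℝ, 0 ≤ M ∧ ∀ j : ℕ+,
    Summable (fun k : ℕ+ => 1 / ((1 + Real.log k) ^ 2 * (1 + |(j : ℝ) - (k : ℝ)|))) ∧
    ∑' k : ℕ+, 1 / ((1 + Real.log k) ^ 2 * (1 + |(j : ℝ) - (k : ℝ)|)) ≤ M := by
  have hsq : Summable (fun n : ℕ => 1 / (n : ℝ) ^ 2) :=
    summable_one_div_nat_pow.mpr one_lt_two
  refine ⟨(∑' m : ℤ, convG m) + ∑' n : ℕ, 1 / (n : ℝ) ^ 2, ?_, ?_⟩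
  · have h1 : 0 ≤ ∑' m : ℤ, convG m := tsum_nonneg convG_nonneg
    have h2 : 0 ≤ ∑' n : ℕ, 1 / (n : ℝ) ^ 2 := tsum_nonneg fun n => by positivity
    linarith
  intro j
  set ι : ℕ+ → ℤ := fun k => (j : ℤ) - (k : ℤ) with hι
  have hιinj : Function.Injective ι := by
    intro a b hab
    simp only [hι, sub_right_inj, Int.natCast_inj] at hab
    exact_mod_cast hab
  have hcastabs : ∀ k : ℕ+, ((ι k).natAbs : ℝ) = |(j : ℝ) - (k : ℝ)| := by
    intro k
    rw [Nat.cast_natAbs]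
    congr 1
    simp only [hι]
    push_cast
    ring
  have hptwise : ∀ k : ℕ+,
      1 / ((1 + Real.log k) ^ 2 * (1 + |(j : ℝ) - (k : ℝ)|)) ≤
        convG (ι k) + 1 / ((k : ℝ)) ^ 2 := by
    intro k
    have hG : convG (ι k) = 4 / ((1 + Real.log (1 + |(j : ℝ) - (k : ℝ)|)) ^ 2 *
        (1 + |(j : ℝ) - (k : ℝ)|)) := by
      unfold convG convBW
      rw [hcastabs k]
      ring
    rw [hG]
    exact convKeyA (k : ℝ) _ (pnat_one_le_real k) (abs_nonneg _)
  have hnnA : ∀ k : ℕ+, 0 ≤ 1 / ((1 + Real.log k) ^ 2 * (1 + |(j : ℝ) - (k : ℝ)|)) := by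
    intro k
    have := Real.log_nonneg (pnat_one_le_real k)
    positivity
  have hsum1 : Summable (fun k : ℕ+ => convG (ι k)) :=
    convG_summable.comp_injective hιinj
  have hsum2 : Summable (fun k : ℕ+ => 1 / ((k : ℝ)) ^ 2) := by
    have := hsq.comp_injective (PNat.coe_injective)
    exact this.congr fun k => by simp [Function.comp]
  have hsumMaj : Summable (fun k : ℕ+ => convG (ι k) + 1 / ((k : ℝ)) ^ 2) := hsum1.add hsum2
  have hsumA : Summable (fun k : ℕ+ =>
      1 / ((1 + Real.log k) ^ 2 * (1 + |(j : ℝ) - (k : ℝ)|))) :=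
    Summable.of_nonneg_of_le hnnA hptwise hsumMaj
  refine ⟨hsumA, ?_⟩
  calc ∑' k : ℕ+, 1 / ((1 + Real.log k) ^ 2 * (1 + |(j : ℝ) - (k : ℝ)|))
      ≤ ∑' k : ℕ+, (convG (ι k) + 1 / ((k : ℝ)) ^ 2) :=
        Summable.tsum_le_tsum hptwise hsumA hsumMaj
    _ = (∑' k : ℕ+, convG (ι k)) + ∑' k : ℕ+, 1 / ((k : ℝ)) ^ 2 :=
        Summable.tsum_add hsum1 hsum2
    _ ≤ (∑' m : ℤ, convG m) + ∑' n : ℕ, 1 / (n : ℝ) ^ 2 := by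
        gcongr
        · exact tsum_comp_le_tsum_of_inj convG_summable convG_nonneg hιinj
        · have := tsum_comp_le_tsum_of_inj hsq (fun n => by positivity)
            (PNat.coe_injective)
          exact le_of_eq_of_le (by rfl) this

/-- The elementary splitting inequality. -/
lemma convSplit (s p q r : ℝ) (hs : 1 ≤ s) (hp : 0 ≤ p) (hq : 0 ≤ q) (hr : 0 ≤ r)
    (hrpq : r ≤ p + q) :
    1 / (s * (1 + p) * (1 + q)) ≤
      2 / (1 + r) * (1 / (s * (1 + p)) + 1 / (s * (1 + q))) := by
  have hspos : (0 : ℝ) < s := by linarith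
  rcases le_total q p with h | h
  · have h1 : 1 / (s * (1 + p) * (1 + q)) ≤ 2 / (1 + r) * (1 / (s * (1 + q))) := by
      rw [div_mul_div_comm, mul_one, div_le_div_iff₀ (by positivity) (by positivity)]
      nlinarith [mul_pos hspos (show (0:ℝ) < 1 + q by linarith)]
    have h2 : (0 : ℝ) ≤ 2 / (1 + r) * (1 / (s * (1 + p))) := by positivity
    nlinarith [h1, h2]
  · have h1 : 1 / (s * (1 + p) * (1 + q)) ≤ 2 / (1 + r) * (1 / (s * (1 + p))) := by
      rw [div_mul_div_comm, mul_one, div_le_div_iff₀ (by positivity) (by positivity)]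
      nlinarith [mul_pos hspos (show (0:ℝ) < 1 + p by linarith)]
    have h2 : (0 : ℝ) ≤ 2 / (1 + r) * (1 / (s * (1 + q))) := by positivity
    nlinarith [h1, h2]

end ConvLogAux

/-- Convolution-type estimate with logarithmic weights (key inequality in the
proof of Lemma 5.5). -/
theorem convolution_log_weight (β : ℝ) (hβ : 1 ≤ β) :
    ∃ C : ℝ, 0 < C ∧ ∀ j l : ℕ+,
      Summable (fun k : ℕ+ =>
        1 / ((1 + Real.log k) ^ (2 * β) * (1 + |(j : ℝ) - (k : ℝ)|) * (1 + |(k : ℝ) - (l : ℝ)|))) ∧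
      ∑' k : ℕ+,
        1 / ((1 + Real.log k) ^ (2 * β) * (1 + |(j : ℝ) - (k : ℝ)|) * (1 + |(k : ℝ) - (l : ℝ)|)) ≤
        C / (1 + |(j : ℝ) - (l : ℝ)|) := by
  obtain ⟨M, hM0, hM⟩ := convLemA
  refine ⟨4 * M + 1, by linarith, ?_⟩
  intro j l
  -- basic facts
  have hbase : ∀ k : ℕ+, (1 : ℝ) ≤ 1 + Real.log k := fun k => by
    have := Real.log_nonneg (pnat_one_le_real k); linarith
  have hrpow : ∀ k : ℕ+, (1 + Real.log (k : ℝ)) ^ 2 ≤ (1 + Real.log k) ^ (2 * β) := by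
    intro k
    have h1 : (1 + Real.log (k : ℝ)) ^ ((2 : ℕ) : ℝ) ≤ (1 + Real.log k) ^ (2 * β) := by
      apply Real.rpow_le_rpow_of_exponent_le (hbase k)
      push_cast; nlinarith
    rwa [Real.rpow_natCast] at h1
  have hrpow_pos : ∀ k : ℕ+, (0 : ℝ) < (1 + Real.log k) ^ (2 * β) := fun k =>
    Real.rpow_pos_of_pos (by linarith [hbase k]) _
  set A : ℕ+ → ℝ := fun k => 1 / ((1 + Real.log k) ^ 2 * (1 + |(j : ℝ) - (k : ℝ)|)) with hA
  set B : ℕ+ → ℝ := fun k => 1 / ((1 + Real.log k) ^ 2 * (1 + |(k : ℝ) - (l : ℝ)|)) with hB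
  obtain ⟨hsumA, htA⟩ := hM j
  obtain ⟨hsumB0, htB0⟩ := hM l
  have hBeq : ∀ k : ℕ+, B k = 1 / ((1 + Real.log k) ^ 2 * (1 + |(l : ℝ) - (k : ℝ)|)) := by
    intro k; rw [hB]; rw [abs_sub_comm]
  have hsumB : Summable B := hsumB0.congr fun k => (hBeq k).symm
  have htB : ∑' k, B k ≤ M := by
    calc ∑' k, B k = ∑' k : ℕ+, 1 / ((1 + Real.log k) ^ 2 * (1 + |(l : ℝ) - (k : ℝ)|)) :=
          tsum_congr hBeq
      _ ≤ M := htB0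
  set T : ℕ+ → ℝ := fun k =>
    1 / ((1 + Real.log k) ^ (2 * β) * (1 + |(j : ℝ) - (k : ℝ)|) * (1 + |(k : ℝ) - (l : ℝ)|))
    with hT
  have hTnn : ∀ k, 0 ≤ T k := fun k => by
    have h1 := hrpow_pos k
    have h2 : (0:ℝ) ≤ |(j : ℝ) - (k : ℝ)| := abs_nonneg _
    have h3 : (0:ℝ) ≤ |(k : ℝ) - (l : ℝ)| := abs_nonneg _
    rw [hT]; positivity
  -- pointwise bound with the squared weight
  have hTle : ∀ k : ℕ+, T k ≤ 2 / (1 + |(j : ℝ) - (l : ℝ)|) * (A k + B k) := by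
    intro k
    have hstep1 : T k ≤
        1 / ((1 + Real.log k) ^ 2 * (1 + |(j : ℝ) - (k : ℝ)|) * (1 + |(k : ℝ) - (l : ℝ)|)) := by
      rw [hT]
      apply one_div_le_one_div_of_le
      · have h2 : (0:ℝ) ≤ |(j : ℝ) - (k : ℝ)| := abs_nonneg _
        have h3 : (0:ℝ) ≤ |(k : ℝ) - (l : ℝ)| := abs_nonneg _
        have h4 : (0:ℝ) < (1 + Real.log (k:ℝ)) ^ 2 := by nlinarith [hbase k]
        positivity
      · exact mul_le_mul_of_nonneg_right
          (mul_le_mul_of_nonneg_right (hrpow k) (by positivity)) (by positivity)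
    have htri : |(j : ℝ) - (l : ℝ)| ≤ |(j : ℝ) - (k : ℝ)| + |(k : ℝ) - (l : ℝ)| :=
      abs_sub_le _ _ _
    have hsplit := convSplit ((1 + Real.log (k : ℝ)) ^ 2)
      (|(j : ℝ) - (k : ℝ)|) (|(k : ℝ) - (l : ℝ)|) (|(j : ℝ) - (l : ℝ)|)
      (by nlinarith [hbase k]) (abs_nonneg _) (abs_nonneg _) (abs_nonneg _) htri
    calc T k ≤ _ := hstep1
      _ ≤ _ := hsplit
      _ = 2 / (1 + |(j : ℝ) - (l : ℝ)|) * (A k + B k) := by rw [hA, hB]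
  -- summability of T
  have hsumRHS : Summable (fun k => 2 / (1 + |(j : ℝ) - (l : ℝ)|) * (A k + B k)) :=
    (hsumA.add hsumB).mul_left _
  have hsumT : Summable T := Summable.of_nonneg_of_le hTnn hTle hsumRHS
  refine ⟨hsumT, ?_⟩
  have habsjl : (0:ℝ) ≤ |(j : ℝ) - (l : ℝ)| := abs_nonneg _
  calc ∑' k, T k ≤ ∑' k, 2 / (1 + |(j : ℝ) - (l : ℝ)|) * (A k + B k) :=
        Summable.tsum_le_tsum hTle hsumT hsumRHS
    _ = 2 / (1 + |(j : ℝ) - (l : ℝ)|) * ((∑' k, A k) + ∑' k, B k) := by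
        rw [tsum_mul_left, Summable.tsum_add hsumA hsumB]
    _ ≤ 2 / (1 + |(j : ℝ) - (l : ℝ)|) * (M + M) := by
        have hpos : (0 : ℝ) ≤ 2 / (1 + |(j : ℝ) - (l : ℝ)|) := by positivity
        exact mul_le_mul_of_nonneg_left (by linarith [htA, htB]) hpos
    _ = 4 * M / (1 + |(j : ℝ) - (l : ℝ)|) := by ring
    _ ≤ (4 * M + 1) / (1 + |(j : ℝ) - (l : ℝ)|) := by
        have hpos : (0 : ℝ) < 1 + |(j : ℝ) - (l : ℝ)| := by positivity
        exact (div_le_div_iff_of_pos_right hpos).mpr (by linarith)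
end

section
/- There exists a constant C > 0 such that for all real numbers p ≥ 2 and β ≥ 1 and every integer j ≥ 1, Σ_{l=1}^∞ (1+j)² / (l^p · (1+|j-l|)² · (1+log l)^{2β}) ≤ C. -/
open Real

private noncomputable def Gw (n : ℤ) : ℝ := 1 / (1 + |(n : ℝ)|) ^ 2

private lemma Gw_nonneg (n : ℤ) : 0 ≤ Gw n := by unfold Gw; positivity

private lemma Gw_summable : Summable Gw := by
  have h : Summable (fun n : ℤ => 1 / |(n : ℝ) + (1/2 : ℝ)| ^ (2 : ℝ)) :=
    (Real.summable_one_div_int_add_rpow (1/2) 2).2 (by norm_num)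
  refine h.of_nonneg_of_le Gw_nonneg fun n => ?_
  unfold Gw
  have h0 : (1:ℝ)/2 ≤ |(n : ℝ) + 1/2| := by
    rcases le_or_gt 0 n with h|h
    · have : (0:ℝ) ≤ (n:ℝ) := by exact_mod_cast h
      rw [abs_of_pos (by linarith)]; linarith
    · have hn : n ≤ -1 := by omega
      have : (n:ℝ) ≤ -1 := by exact_mod_cast hn
      rw [abs_of_neg (by linarith)]; linarith
  have h1 : |(n : ℝ) + 1/2| ≤ 1 + |(n : ℝ)| := by
    calc |(n : ℝ) + 1/2| ≤ |(n : ℝ)| + |(1/2 : ℝ)| := abs_add_le _ _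
      _ ≤ 1 + |(n : ℝ)| := by rw [show |(1/2:ℝ)| = 1/2 by norm_num]; linarith
  rw [show ((2:ℝ)) = ((2:ℕ):ℝ) by norm_num, Real.rpow_natCast]
  exact one_div_le_one_div_of_le (by positivity) (pow_le_pow_left₀ (by linarith) h1 2)

private lemma key_bound (p β : ℝ) (hp : 2 ≤ p) (hβ : 1 ≤ β) (j l : ℕ+) :
    (1 + (j : ℝ)) ^ 2 /
        ((l : ℝ) ^ p * (1 + |(j : ℝ) - (l : ℝ)|) ^ 2 * (1 + Real.log l) ^ (2 * β)) ≤
      16 / (l : ℝ) ^ 2 + 16 / (1 + |(j : ℝ) - (l : ℝ)|) ^ 2 := by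
  set x : ℝ := (l : ℝ) with hxdef
  set y : ℝ := (j : ℝ) with hydef
  have hx : 1 ≤ x := by rw [hxdef]; exact_mod_cast l.one_le
  have hy : 1 ≤ y := by rw [hydef]; exact_mod_cast j.one_le
  set a : ℝ := |y - x| with hadef
  have ha : 0 ≤ a := abs_nonneg _
  have hlog : 0 ≤ Real.log x := Real.log_nonneg hx
  have h1 : (1:ℝ) ≤ (1 + Real.log x) ^ (2 * β) :=
    Real.one_le_rpow (by linarith) (by linarith)
  have h2 : x ^ (2:ℕ) ≤ x ^ p := by
    rw [← Real.rpow_natCast x 2]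
    exact Real.rpow_le_rpow_of_exponent_le hx (by exact_mod_cast hp)
  have hxp : (0:ℝ) < x ^ p := Real.rpow_pos_of_pos (by linarith) p
  have step1 : (1 + y) ^ 2 / (x ^ p * (1 + a) ^ 2 * (1 + Real.log x) ^ (2 * β)) ≤
      (1 + y) ^ 2 / (x ^ 2 * (1 + a) ^ 2) := by
    apply div_le_div_of_nonneg_left (by positivity) (by positivity)
    calc x ^ 2 * (1 + a) ^ 2 ≤ x ^ p * (1 + a) ^ 2 := by
          apply mul_le_mul_of_nonneg_right h2 (by positivity)
      _ ≤ x ^ p * (1 + a) ^ 2 * (1 + Real.log x) ^ (2 * β) :=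
          le_mul_of_one_le_right (by positivity) h1
  refine step1.trans ?_
  rcases le_or_gt y (2 * x) with hc | hc
  · have h16 : (1 + y) ^ 2 ≤ 16 * x ^ 2 := by nlinarith
    have : (1 + y) ^ 2 / (x ^ 2 * (1 + a) ^ 2) ≤ 16 / (1 + a) ^ 2 := by
      rw [div_le_div_iff₀ (by positivity) (by positivity)]
      nlinarith [mul_le_mul_of_nonneg_right h16 (sq_nonneg (1 + a))]
    have h0 : (0:ℝ) ≤ 16 / x ^ 2 := by positivity
    linarith
  · have haeq : a = y - x := abs_of_pos (by linarith)
    have h16 : (1 + y) ^ 2 ≤ 16 * (1 + a) ^ 2 := by nlinarith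
    have : (1 + y) ^ 2 / (x ^ 2 * (1 + a) ^ 2) ≤ 16 / x ^ 2 := by
      rw [div_le_div_iff₀ (by positivity) (by positivity)]
      nlinarith [mul_le_mul_of_nonneg_right h16 (sq_nonneg x)]
    have h0 : (0:ℝ) ≤ 16 / (1 + a) ^ 2 := by positivity
    linarith

private lemma pnat_sq_summable : Summable (fun l : ℕ+ => 16 / (l : ℝ) ^ 2) := by
  have h : Summable (fun n : ℕ => 16 / (n : ℝ) ^ 2) := by
    have := summable_one_div_nat_pow.2 (show 1 < 2 by norm_num)
    simpa [div_eq_mul_inv] using this.mul_left 16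
  exact h.comp_injective PNat.coe_injective

private lemma pnat_center_summable (j : ℕ+) :
    Summable (fun l : ℕ+ => 16 / (1 + |(j : ℝ) - (l : ℝ)|) ^ 2) ∧
    ∑' l : ℕ+, 16 / (1 + |(j : ℝ) - (l : ℝ)|) ^ 2 ≤ 16 * ∑' n : ℤ, Gw n := by
  have hF : Summable (fun n : ℤ => Gw ((j : ℤ) - n)) :=
    ((Equiv.subLeft (j:ℤ)).summable_iff (f := Gw)).2 Gw_summable
  have htF : ∑' n : ℤ, Gw ((j : ℤ) - n) = ∑' n : ℤ, Gw n :=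
    (Equiv.subLeft (j:ℤ)).tsum_eq Gw
  have hi : Function.Injective (fun l : ℕ+ => ((l : ℕ) : ℤ)) :=
    fun a b h => by simp only [] at h; exact_mod_cast h
  have hcomp : (fun l : ℕ+ => Gw ((j : ℤ) - ((l : ℕ) : ℤ))) =
      fun l : ℕ+ => 1 / (1 + |(j : ℝ) - (l : ℝ)|) ^ 2 := by
    funext l; unfold Gw; push_cast; ring_nf
  have hsum1 : Summable (fun l : ℕ+ => 1 / (1 + |(j : ℝ) - (l : ℝ)|) ^ 2) := by
    rw [← hcomp]; exact hF.comp_injective hi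
  constructor
  · simpa [div_eq_mul_inv, mul_comm, mul_assoc] using hsum1.mul_left 16
  · have hle : ∑' l : ℕ+, 1 / (1 + |(j : ℝ) - (l : ℝ)|) ^ 2 ≤ ∑' n : ℤ, Gw n := by
      rw [← htF, ← hcomp]
      exact (hF.comp_injective hi).tsum_le_tsum_of_inj _ hi (fun c _ => Gw_nonneg _) (fun b => le_rfl)
        hF
    calc ∑' l : ℕ+, 16 / (1 + |(j : ℝ) - (l : ℝ)|) ^ 2
        = 16 * ∑' l : ℕ+, 1 / (1 + |(j : ℝ) - (l : ℝ)|) ^ 2 := by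
          rw [← tsum_mul_left]; congr 1; funext l; ring
      _ ≤ 16 * ∑' n : ℤ, Gw n := by
          have : 0 ≤ ∑' n : ℤ, Gw n := tsum_nonneg (fun n : ℤ => Gw_nonneg n)
          nlinarith [hle]

/-- Lemma 7.3: `Σ_{l≥1} (1+j)²/(l^p (1+|j-l|)² (1+log l)^{2β}) ≤ C`
uniformly in `j ≥ 1`, `p ≥ 2` and `β ≥ 1`. -/
theorem sum_power_log_weight_bounded :
    ∃ C : ℝ, 0 < C ∧ ∀ p β : ℝ, 2 ≤ p → 1 ≤ β → ∀ j : ℕ+,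
      Summable (fun l : ℕ+ =>
        (1 + (j : ℝ)) ^ 2 /
          ((l : ℝ) ^ p * (1 + |(j : ℝ) - (l : ℝ)|) ^ 2 * (1 + Real.log l) ^ (2 * β))) ∧
      ∑' l : ℕ+,
        (1 + (j : ℝ)) ^ 2 /
          ((l : ℝ) ^ p * (1 + |(j : ℝ) - (l : ℝ)|) ^ 2 * (1 + Real.log l) ^ (2 * β)) ≤ C := by
  refine ⟨(∑' l : ℕ+, 16 / (l : ℝ) ^ 2) + 16 * (∑' n : ℤ, Gw n) + 1, ?_, ?_⟩
  · have h1 : 0 ≤ ∑' l : ℕ+, 16 / (l : ℝ) ^ 2 := tsum_nonneg (fun l => by positivity)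
    have h2 : 0 ≤ ∑' n : ℤ, Gw n := tsum_nonneg (fun n => Gw_nonneg n)
    linarith
  · intro p β hp hβ j
    obtain ⟨hc_sum, hc_le⟩ := pnat_center_summable j
    have hg : Summable (fun l : ℕ+ =>
        16 / (l : ℝ) ^ 2 + 16 / (1 + |(j : ℝ) - (l : ℝ)|) ^ 2) :=
      pnat_sq_summable.add hc_sum
    have hterm : Summable (fun l : ℕ+ =>
        (1 + (j : ℝ)) ^ 2 /
          ((l : ℝ) ^ p * (1 + |(j : ℝ) - (l : ℝ)|) ^ 2 * (1 + Real.log l) ^ (2 * β))) := by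
      refine hg.of_nonneg_of_le (fun l => by positivity) (fun l => key_bound p β hp hβ j l)
    refine ⟨hterm, ?_⟩
    calc ∑' l : ℕ+,
          (1 + (j : ℝ)) ^ 2 /
            ((l : ℝ) ^ p * (1 + |(j : ℝ) - (l : ℝ)|) ^ 2 * (1 + Real.log l) ^ (2 * β))
        ≤ ∑' l : ℕ+, (16 / (l : ℝ) ^ 2 + 16 / (1 + |(j : ℝ) - (l : ℝ)|) ^ 2) :=
          hterm.tsum_le_tsum (fun l => key_bound p β hp hβ j l) hg
      _ = (∑' l : ℕ+, 16 / (l : ℝ) ^ 2) +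
          ∑' l : ℕ+, 16 / (1 + |(j : ℝ) - (l : ℝ)|) ^ 2 :=
          Summable.tsum_add pnat_sq_summable hc_sum
      _ ≤ (∑' l : ℕ+, 16 / (l : ℝ) ^ 2) + 16 * (∑' n : ℤ, Gw n) + 1 := by linarith
end
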